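/- With notation as in the CBCT recursion (β ≥ 1/2, P_m defined via the max-recursion), the tree T* obtained by the pruning rule — starting from the root, keep node s as a leaf if β P_e(s) ≥ (1-β) ∏_j P_m(sj), otherwise recurse into all m children, with all depth-D nodes being leaves — satisfies π_D(T*) ∏_{s ∈ leaves(T*)} P_e(s) = P_m(root), i.e., T* attains the maximum of π_D(T) ∏_{s ∈ leaves(T)} P_e(s) over T ∈ 𝒯(D). -/
import Mathlib


inductive PTree (m : ℕ) : Type
  | leaf : PTree m
  | node (c : Fin m → PTree m) : PTree m

namespace PTree

def depth {m : ℕ} : PTree m → ℕ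
  | leaf => 0
  | node c => (Finset.univ.sup fun j => depth (c j)) + 1

def numLeaves {m : ℕ} : PTree m → ℕ
  | leaf => 1
  | node c => ∑ j, numLeaves (c j)

def leavesAt {m : ℕ} : ℕ → PTree m → ℕ
  | 0, leaf => 1
  | 0, node _ => 0
  | _ + 1, leaf => 0
  | d + 1, node c => ∑ j, leavesAt d (c j)

noncomputable def prior {m : ℕ} (α β : ℝ) (D : ℕ) (T : PTree m) : ℝ :=
  α ^ (numLeaves T - 1) * β ^ (numLeaves T - leavesAt D T)

def leafList {m : ℕ} : PTree m → List (List (Fin m))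
  | leaf => [[]]
  | node c => (List.finRange m).flatMap fun j => (leafList (c j)).map fun u => j :: u

end PTree

/-- Maximal probabilities of the CBCT recursion; first argument is the remaining depth. -/
noncomputable def Pm {m : ℕ} (β : ℝ) (Pe : List (Fin m) → ℝ) : ℕ → List (Fin m) → ℝ
  | 0, s => Pe s
  | d + 1, s => max (β * Pe s) ((1 - β) * ∏ j, Pm β Pe d (s ++ [j]))

open scoped Classical in
/-- The tree obtained by the CBCT pruning rule: a node at remaining depth `0`
(i.e. depth `D`) is a leaf; otherwise it is kept as a leaf if
`β Pe(s) ≥ (1-β) ∏_j Pm(sj)` and we recurse into all `m` children otherwise. -/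
noncomputable def pruneT {m : ℕ} (β : ℝ) (Pe : List (Fin m) → ℝ) :
    ℕ → List (Fin m) → PTree m
  | 0, _ => PTree.leaf
  | d + 1, s =>
      if (1 - β) * ∏ j, Pm β Pe d (s ++ [j]) ≤ β * Pe s then PTree.leaf
      else PTree.node fun j => pruneT β Pe d (s ++ [j])

/- ------------------- auxiliary lemmas ------------------- -/

lemma flatMap_map_prod {α' β' γ' : Type*} [CommMonoid γ'] (l : List α') (f : α' → List β')
    (g : β' → γ') :
    ((l.flatMap f).map g).prod = (l.map fun a => ((f a).map g).prod).prod := by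
  induction l with
  | nil => simp
  | cons a l ih => simp [List.flatMap_cons, ih]

namespace PTree

lemma one_le_numLeaves {m : ℕ} (hm : 1 ≤ m) : ∀ T : PTree m, 1 ≤ numLeaves T
  | leaf => le_refl 1
  | node c => by
      calc 1 ≤ numLeaves (c ⟨0, hm⟩) := one_le_numLeaves hm _
        _ ≤ ∑ j, numLeaves (c j) :=
            Finset.single_le_sum (f := fun j => numLeaves (c j)) (fun _ _ => Nat.zero_le _)
              (Finset.mem_univ _)
        _ = numLeaves (node c) := rfl

lemma leavesAt_le_numLeaves {m : ℕ} : ∀ (d : ℕ) (T : PTree m), leavesAt d T ≤ numLeaves T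
  | 0, leaf => le_refl 1
  | 0, node _ => Nat.zero_le _
  | _ + 1, leaf => Nat.zero_le _
  | d + 1, node c => Finset.sum_le_sum fun j _ => leavesAt_le_numLeaves d (c j)

/-- product of the `Pe`-values over the leaves of `T`, rooted at `s`. -/
noncomputable def leafProd {m : ℕ} (Pe : List (Fin m) → ℝ) (s : List (Fin m)) (T : PTree m) : ℝ :=
  ((leafList T).map fun u => Pe (s ++ u)).prod

lemma leafProd_leaf {m : ℕ} (Pe : List (Fin m) → ℝ) (s : List (Fin m)) :
    leafProd Pe s leaf = Pe s := by
  simp [leafProd, leafList]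

lemma leafProd_node {m : ℕ} (Pe : List (Fin m) → ℝ) (s : List (Fin m)) (c : Fin m → PTree m) :
    leafProd Pe s (node c) = ∏ j, leafProd Pe (s ++ [j]) (c j) := by
  unfold leafProd
  rw [leafList, flatMap_map_prod, Fin.prod_univ_def]
  refine congrArg List.prod (List.map_congr_left fun j _ => ?_)
  rw [List.map_map]
  simp [Function.comp_def]

end PTree

lemma prior_node {m : ℕ} (hm : 1 ≤ m) (α β : ℝ)
    (d : ℕ) (c : Fin m → PTree m) :
    PTree.prior α β (d + 1) (PTree.node c) = α ^ (m - 1) * ∏ j, PTree.prior α β d (c j) := by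
  unfold PTree.prior
  have hnum : PTree.numLeaves (PTree.node c) = ∑ j, PTree.numLeaves (c j) := rfl
  have hlv : PTree.leavesAt (d + 1) (PTree.node c) = ∑ j, PTree.leavesAt d (c j) := rfl
  have h1 : ∀ j : Fin m, 1 ≤ PTree.numLeaves (c j) := fun j => PTree.one_le_numLeaves hm _
  have hml : (m : ℕ) ≤ ∑ j, PTree.numLeaves (c j) := by
    calc (m : ℕ) = ∑ _j : Fin m, 1 := by simp
      _ ≤ ∑ j, PTree.numLeaves (c j) := Finset.sum_le_sum fun j _ => h1 j
  have e1 : ∑ j, (PTree.numLeaves (c j) - 1) = (∑ j, PTree.numLeaves (c j)) - m := by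
    rw [Finset.sum_tsub_distrib _ (fun j _ => h1 j)]
    simp
  have e2 : ∑ j, (PTree.numLeaves (c j) - PTree.leavesAt d (c j))
      = (∑ j, PTree.numLeaves (c j)) - ∑ j, PTree.leavesAt d (c j) :=
    Finset.sum_tsub_distrib _ (fun j _ => PTree.leavesAt_le_numLeaves d (c j))
  have hexp : (m - 1) + ((∑ j, PTree.numLeaves (c j)) - m)
      = (∑ j, PTree.numLeaves (c j)) - 1 := by omega
  rw [hnum, hlv, Finset.prod_mul_distrib, Finset.prod_pow_eq_pow_sum,
    Finset.prod_pow_eq_pow_sum, e1, e2, ← mul_assoc, ← pow_add, hexp]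

/-- Key induction: the pruned tree rooted at `s` with remaining depth `d` attains `Pm`. -/
lemma pruneT_attains {m : ℕ} (hm : 2 ≤ m) {α β : ℝ}
    (hβ2 : (1 : ℝ) / 2 ≤ β) (hβ1 : β < 1)
    (hα : α = (1 - β) ^ ((1 : ℝ) / ((m : ℝ) - 1)))
    (Pe : List (Fin m) → ℝ) (hPe : ∀ s, 0 < Pe s) :
    ∀ (d : ℕ) (s : List (Fin m)),
      PTree.prior α β d (pruneT β Pe d s) * PTree.leafProd Pe s (pruneT β Pe d s)
        = Pm β Pe d s := by
  have hm1 : 1 ≤ m := le_trans (by norm_num) hm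
  have hβ0 : (0 : ℝ) ≤ 1 - β := by linarith
  have hm2 : ((m : ℝ) - 1) ≠ 0 := by
    have : (2 : ℝ) ≤ (m : ℝ) := by exact_mod_cast hm
    linarith
  have hαpow : α ^ (m - 1) = 1 - β := by
    rw [hα, ← Real.rpow_natCast ((1 - β) ^ ((1 : ℝ) / ((m : ℝ) - 1))) (m - 1),
      ← Real.rpow_mul hβ0]
    have hcast : ((m - 1 : ℕ) : ℝ) = (m : ℝ) - 1 := by
      rw [Nat.cast_sub hm1]; norm_num
    rw [hcast, one_div, inv_mul_cancel₀ hm2, Real.rpow_one]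
  intro d
  induction d with
  | zero =>
      intro s
      simp [pruneT, PTree.prior, PTree.numLeaves, PTree.leavesAt, PTree.leafProd_leaf, Pm]
  | succ d ih =>
      intro s
      rw [pruneT]
      split_ifs with h
      · have : Pm β Pe (d + 1) s = β * Pe s := by
          rw [Pm]; exact max_eq_left h
        rw [this]
        simp [PTree.prior, PTree.numLeaves, PTree.leavesAt, PTree.leafProd_leaf]
      · have hmax : Pm β Pe (d + 1) s = (1 - β) * ∏ j, Pm β Pe d (s ++ [j]) := by
          rw [Pm]; exact max_eq_right (le_of_lt (lt_of_not_ge h))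
        rw [hmax, prior_node hm1 α β d, PTree.leafProd_node, hαpow, mul_assoc,
          ← Finset.prod_mul_distrib]
        congr 1
        exact Finset.prod_congr rfl fun j _ => ih (s ++ [j])

/-- the tree produced by the CBCT pruning rule attains the maximal
probability `Pm(root)`, i.e. it is a maximiser of `π_D(T) ∏_{s ∈ leaves(T)} Pe(s)`. -/
theorem cbct_pruned_tree_attains_max {m : ℕ} (hm : 2 ≤ m) {α β : ℝ}
    (hβ2 : (1 : ℝ) / 2 ≤ β) (hβ1 : β < 1)
    (hα : α = (1 - β) ^ ((1 : ℝ) / ((m : ℝ) - 1)))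
    (D : ℕ) (Pe : List (Fin m) → ℝ) (hPe : ∀ s, 0 < Pe s) :
    PTree.prior α β D (pruneT β Pe D [])
        * ((PTree.leafList (pruneT β Pe D [])).map Pe).prod
      = Pm β Pe D [] := by
  have h := pruneT_attains hm hβ2 hβ1 hα Pe hPe D []
  simpa [PTree.leafProd] using h
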